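/- arXiv:2204.10789 — 4 statements merged into one kernel-verified Lean document; each statement's English description precedes it below -/
import Mathlib

section
/- For any HT-interpretation ⟨H, I⟩ and any sentence F, if I satisfies F classically and Pos_I(F) ⊆ H, then ⟨H, I⟩ satisfies F in the logic of here-and-there. -/
/-! Framework: first-order formulas over a signature with predicate symbols `P`
(partitioned into intensional and extensional ones by `ints : P → Bool`) and a
fixed domain `D`.  Sentences over the extended signature σ^I are represented with
quantifiers as functions on the domain (names of domain elements are the elements
themselves), so ground atoms are pairs `(p, ds)`. -/

inductive Fml (P D : Type) : Type where
  | atom : P → List D → Fml P D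
  | eq : D → D → Fml P D
  | bot : Fml P D
  | and : Fml P D → Fml P D → Fml P D
  | or : Fml P D → Fml P D → Fml P D
  | imp : Fml P D → Fml P D → Fml P D
  | all : (D → Fml P D) → Fml P D
  | ex : (D → Fml P D) → Fml P D

abbrev GrAtom (P D : Type) := P × List D
abbrev Interp (P D : Type) := P → List D → Prop

namespace Fml
variable {P D : Type}

/-- Classical satisfaction. -/
def sat (I : Interp P D) : Fml P D → Prop
  | atom p ds => I p ds
  | eq a b => a = b
  | bot => False
  | and F G => F.sat I ∧ G.sat I
  | or F G => F.sat I ∨ G.sat I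
  | imp F G => F.sat I → G.sat I
  | all f => ∀ d, (f d).sat I
  | ex f => ∃ d, (f d).sat I

/-- `I↓`: the intensional ground atoms satisfied by `I`. -/
def idown (ints : P → Bool) (I : Interp P D) : Set (GrAtom P D) :=
  {a | ints a.1 = true ∧ I a.1 a.2}

/-- Here-and-there satisfaction for an HT-interpretation `⟨H, I⟩`. -/
def htSat (ints : P → Bool) (H : Set (GrAtom P D)) (I : Interp P D) : Fml P D → Prop
  | atom p ds => if ints p then (p, ds) ∈ H else I p ds
  | eq a b => a = b
  | bot => False
  | and F G => F.htSat ints H I ∧ G.htSat ints H I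
  | or F G => F.htSat ints H I ∨ G.htSat ints H I
  | imp F G => (F.htSat ints H I → G.htSat ints H I) ∧ (F.sat I → G.sat I)
  | all f => ∀ d, (f d).htSat ints H I
  | ex f => ∃ d, (f d).htSat ints H I

/-- `F` contains an intensional predicate symbol. -/
def hasIntens (ints : P → Bool) : Fml P D → Prop
  | atom p _ => ints p = true
  | eq _ _ => False
  | bot => False
  | and F G => F.hasIntens ints ∨ G.hasIntens ints
  | or F G => F.hasIntens ints ∨ G.hasIntens ints
  | imp F G => F.hasIntens ints ∨ G.hasIntens ints
  | all f => ∃ d, (f d).hasIntens ints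
  | ex f => ∃ d, (f d).hasIntens ints

/-- The predicate symbol `q` occurs in `F`. -/
def hasPred (q : P) : Fml P D → Prop
  | atom p _ => p = q
  | eq _ _ => False
  | bot => False
  | and F G => F.hasPred q ∨ G.hasPred q
  | or F G => F.hasPred q ∨ G.hasPred q
  | imp F G => F.hasPred q ∨ G.hasPred q
  | all f => ∃ d, (f d).hasPred q
  | ex f => ∃ d, (f d).hasPred q

open scoped Classical in
/-- The set `Pos_I(F)` of strictly positive atoms of `F` with respect to `I`. -/
noncomputable def pos (ints : P → Bool) (I : Interp P D) : Fml P D → Set (GrAtom P D)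
  | atom p ds => if ints p = true ∧ I p ds then {(p, ds)} else ∅
  | eq _ _ => ∅
  | bot => ∅
  | and F G =>
      if (Fml.and F G).hasIntens ints ∧ (Fml.and F G).sat I then
        F.pos ints I ∪ G.pos ints I else ∅
  | or F G =>
      if (Fml.or F G).hasIntens ints ∧ (Fml.or F G).sat I then
        F.pos ints I ∪ G.pos ints I else ∅
  | imp F G =>
      if (Fml.imp F G).hasIntens ints ∧ (Fml.imp F G).sat I then G.pos ints I else ∅
  | all f =>
      if (Fml.all f).hasIntens ints ∧ (Fml.all f).sat I then ⋃ d, (f d).pos ints I else ∅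
  | ex f =>
      if (Fml.ex f).hasIntens ints ∧ (Fml.ex f).sat I then ⋃ d, (f d).pos ints I else ∅

/-- `ruleSub S R`: `R` is obtained from a rule subformula of `S` (an occurrence of an
implication not in the antecedent of any implication) by substituting domain elements
for the free variables. -/
inductive ruleSub : Fml P D → Fml P D → Prop
  | self (F G : Fml P D) : ruleSub (Fml.imp F G) (Fml.imp F G)
  | andL {F G R : Fml P D} : ruleSub F R → ruleSub (Fml.and F G) R
  | andR {F G R : Fml P D} : ruleSub G R → ruleSub (Fml.and F G) R
  | orL {F G R : Fml P D} : ruleSub F R → ruleSub (Fml.or F G) R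
  | orR {F G R : Fml P D} : ruleSub G R → ruleSub (Fml.or F G) R
  | impR {F G R : Fml P D} : ruleSub G R → ruleSub (Fml.imp F G) R
  | all {f : D → Fml P D} {R : Fml P D} (d : D) : ruleSub (f d) R → ruleSub (Fml.all f) R
  | ex {f : D → Fml P D} {R : Fml P D} (d : D) : ruleSub (f d) R → ruleSub (Fml.ex f) R

end Fml

variable {P D : Type}

/-- Edge relation of the positive dependency graph `G^sp_I(Γ)`. -/
def depEdge (ints : P → Bool) (I : Interp P D) (Γ : Set (Fml P D))
    (A B : GrAtom P D) : Prop :=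
  ∃ S ∈ Γ, ∃ F G : Fml P D, S.ruleSub (Fml.imp F G) ∧
    A ∈ G.pos ints I ∧ B ∈ F.pos ints I

/-- A graph (given by its edge relation) has no infinite walks. -/
def NoInfWalks {V : Type} (E : V → V → Prop) : Prop :=
  ¬ ∃ w : ℕ → V, ∀ n, E (w n) (w (n + 1))

def SatSet (I : Interp P D) (Γ : Set (Fml P D)) : Prop := ∀ F ∈ Γ, F.sat I

def HtSatSet (ints : P → Bool) (H : Set (GrAtom P D)) (I : Interp P D)
    (Γ : Set (Fml P D)) : Prop := ∀ F ∈ Γ, F.htSat ints H I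

/-- `I` is a stable model of `Γ`. -/
def StableModel (ints : P → Bool) (I : Interp P D) (Γ : Set (Fml P D)) : Prop :=
  SatSet I Γ ∧ ∀ H : Set (GrAtom P D), H ⊂ Fml.idown ints I → ¬ HtSatSet ints H I Γ

/-- `I` is a pointwise stable model of `Γ`. -/
def PointwiseStable (ints : P → Bool) (I : Interp P D) (Γ : Set (Fml P D)) : Prop :=
  SatSet I Γ ∧ ∀ M ∈ Fml.idown ints I,
    ¬ HtSatSet ints (Fml.idown ints I \ {M}) I Γ

/-! ### Completable sets -/

/-- A member of the definition of the intensional symbol `p`: the completable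
sentence `∀̃ (F(U, V) → p(V))` with `m` extra variables `U` and `k` head variables `V`. -/
structure CRule (P D : Type) where
  p : P
  k : ℕ
  m : ℕ
  F : (Fin m → D) → (Fin k → D) → Fml P D

/-- A first-order constraint `∀̃ (F → G)` (with `G` containing no intensional symbols). -/
structure CConstr (P D : Type) where
  n : ℕ
  F : (Fin n → D) → Fml P D
  G : (Fin n → D) → Fml P D

/-- A completable set of sentences: definitions plus constraints. -/
structure CSet (P D : Type) where
  rules : List (CRule P D)
  constrs : List (CConstr P D)

/-- The conditions making a `CSet` a completable set: head symbols are intensional,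
consequents of definitions of the same symbol are identical, and consequents of
constraints contain no intensional symbols. -/
def CSet.Completable (ints : P → Bool) (Γ : CSet P D) : Prop :=
  (∀ r ∈ Γ.rules, ints r.p = true) ∧
  (∀ r ∈ Γ.rules, ∀ r' ∈ Γ.rules, r.p = r'.p → r.k = r'.k) ∧
  (∀ c ∈ Γ.constrs, ∀ a, ¬ (c.G a).hasIntens ints)

/-- `n`-fold universal quantification. -/
def allN : (n : ℕ) → ((Fin n → D) → Fml P D) → Fml P D
  | 0, F => F (fun i => i.elim0)
  | n + 1, F => Fml.all fun d => allN n fun a => F (Fin.cons d a)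

def CRule.sent (r : CRule P D) : Fml P D :=
  allN r.m fun u => allN r.k fun v =>
    Fml.imp (r.F u v) (Fml.atom r.p (List.ofFn v))

def CConstr.sent (c : CConstr P D) : Fml P D :=
  allN c.n fun a => Fml.imp (c.F a) (c.G a)

/-- The set of sentences of a completable set. -/
def CSet.sents (Γ : CSet P D) : Set (Fml P D) :=
  {S | ∃ r ∈ Γ.rules, S = r.sent} ∪ {S | ∃ c ∈ Γ.constrs, S = c.sent}

/-- `I` is a supported model of `Γ`: every true intensional ground atom `p(d)` is the
consequent of an instance `F → p(d)` of a member of `Γ` whose antecedent is satisfied. -/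
def CSet.Supported (ints : P → Bool) (I : Interp P D) (Γ : CSet P D) : Prop :=
  SatSet I Γ.sents ∧
  ∀ p (ds : List D), ints p = true → I p ds →
    ∃ r ∈ Γ.rules, r.p = p ∧
      ∃ (v : Fin r.k → D) (u : Fin r.m → D), List.ofFn v = ds ∧ (r.F u v).sat I

/-- `I` satisfies the completion `COMP[Γ]` of the completable set `Γ`:
the completed definitions of all intensional symbols plus the constraints. -/
def CSet.SatComp (ints : P → Bool) (I : Interp P D) (Γ : CSet P D) : Prop :=
  (∀ p, ints p = true → ∀ ds : List D,
    (I p ds ↔ ∃ r ∈ Γ.rules, r.p = p ∧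
      ∃ (v : Fin r.k → D) (u : Fin r.m → D), List.ofFn v = ds ∧ (r.F u v).sat I)) ∧
  (∀ c ∈ Γ.constrs, ∀ a, (c.F a).sat I → (c.G a).sat I)

/-- Edge relation of `G^sp_I(Γ)` for a completable set `Γ`, via instances `F → G`
of its members. -/
def CSet.edge (ints : P → Bool) (I : Interp P D) (Γ : CSet P D)
    (A B : GrAtom P D) : Prop :=
  ∃ F G : Fml P D,
    ((∃ r ∈ Γ.rules, ∃ (u : Fin r.m → D) (v : Fin r.k → D),
        F = r.F u v ∧ G = Fml.atom r.p (List.ofFn v)) ∨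
     (∃ c ∈ Γ.constrs, ∃ a : Fin c.n → D, F = c.F a ∧ G = c.G a)) ∧
    A ∈ G.pos ints I ∧ B ∈ F.pos ints I

/-- `I` is a stable model of the completable set `Γ`. -/
def CSet.Stable (ints : P → Bool) (I : Interp P D) (Γ : CSet P D) : Prop :=
  StableModel ints I Γ.sents

/-- `I` is a pointwise stable model of the completable set `Γ`. -/
def CSet.PointwiseStable (ints : P → Bool) (I : Interp P D) (Γ : CSet P D) : Prop :=
  _root_.PointwiseStable ints I Γ.sents

theorem sat_of_htSat {P D : Type} {ints : P → Bool} {I : Interp P D}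
    {H : Set (GrAtom P D)} (hH : H ⊆ Fml.idown ints I) :
    ∀ F : Fml P D, F.htSat ints H I → F.sat I := by
  intro F
  induction F with
  | atom p ds =>
    intro h
    simp only [Fml.htSat] at h
    simp only [Fml.sat]
    split at h
    · exact (hH h).2
    · exact h
  | eq a b => exact id
  | bot => exact id
  | and F G ihF ihG => exact fun h => ⟨ihF h.1, ihG h.2⟩
  | or F G ihF ihG => exact fun h => h.imp ihF ihG
  | imp F G ihF ihG => exact fun h => h.2
  | all f ih => exact fun h d => ih d (h d)
  | ex f ih => exact fun ⟨d, hd⟩ => ⟨d, ih d hd⟩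

theorem htSat_iff_sat_of_not_hasIntens {P D : Type} {ints : P → Bool} {I : Interp P D}
    {H : Set (GrAtom P D)} :
    ∀ F : Fml P D, ¬ F.hasIntens ints → (F.htSat ints H I ↔ F.sat I) := by
  intro F
  induction F with
  | atom p ds =>
    intro hni
    simp only [Fml.hasIntens] at hni
    simp only [Fml.htSat, Fml.sat]
    split
    · exact absurd (by assumption) hni
    · rfl
  | eq a b => exact fun _ => Iff.rfl
  | bot => exact fun _ => Iff.rfl
  | and F G ihF ihG =>
    intro hni
    simp only [Fml.hasIntens, not_or] at hni
    exact and_congr (ihF hni.1) (ihG hni.2)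
  | or F G ihF ihG =>
    intro hni
    simp only [Fml.hasIntens, not_or] at hni
    exact or_congr (ihF hni.1) (ihG hni.2)
  | imp F G ihF ihG =>
    intro hni
    simp only [Fml.hasIntens, not_or] at hni
    show _ ∧ _ ↔ _
    rw [ihF hni.1, ihG hni.2]
    exact and_iff_right_of_imp id
  | all f ih =>
    intro hni
    simp only [Fml.hasIntens, not_exists] at hni
    exact forall_congr' fun d => ih d (hni d)
  | ex f ih =>
    intro hni
    simp only [Fml.hasIntens, not_exists] at hni
    exact exists_congr fun d => ih d (hni d)

/-- Lemma 1: if `I ⊨ F` and `Pos_I(F) ⊆ H` then `⟨H, I⟩ ⊨_ht F`. -/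
theorem htSat_of_sat_of_pos_subset {P D : Type} (ints : P → Bool) (I : Interp P D)
    (H : Set (GrAtom P D)) (hH : H ⊆ Fml.idown ints I) (F : Fml P D)
    (hsat : F.sat I) (hpos : F.pos ints I ⊆ H) : F.htSat ints H I := by
  induction F with
  | atom p ds =>
    simp only [Fml.htSat]
    split
    · apply hpos
      simp only [Fml.pos, if_pos (⟨by assumption, hsat⟩ : ints p = true ∧ I p ds)]
      rfl
    · exact hsat
  | eq a b => exact hsat
  | bot => exact hsat
  | and F G ihF ihG =>
    by_cases hint : (Fml.and F G).hasIntens ints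
    · simp only [Fml.pos, if_pos (And.intro hint hsat)] at hpos
      exact ⟨ihF hsat.1 (Set.union_subset_iff.mp hpos).1,
             ihG hsat.2 (Set.union_subset_iff.mp hpos).2⟩
    · exact (htSat_iff_sat_of_not_hasIntens _ hint).mpr hsat
  | or F G ihF ihG =>
    by_cases hint : (Fml.or F G).hasIntens ints
    · simp only [Fml.pos, if_pos (And.intro hint hsat)] at hpos
      exact hsat.imp (fun h => ihF h (Set.union_subset_iff.mp hpos).1)
        (fun h => ihG h (Set.union_subset_iff.mp hpos).2)
    · exact (htSat_iff_sat_of_not_hasIntens _ hint).mpr hsat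
  | imp F G ihF ihG =>
    by_cases hint : (Fml.imp F G).hasIntens ints
    · simp only [Fml.pos, if_pos (And.intro hint hsat)] at hpos
      refine ⟨fun hF => ?_, hsat⟩
      exact ihG (hsat (sat_of_htSat hH F hF)) hpos
    · exact (htSat_iff_sat_of_not_hasIntens _ hint).mpr hsat
  | all f ih =>
    by_cases hint : (Fml.all f).hasIntens ints
    · simp only [Fml.pos, if_pos (And.intro hint hsat)] at hpos
      exact fun d => ih d (hsat d) ((Set.subset_iUnion (fun d => (f d).pos ints I) d).trans hpos)
    · exact (htSat_iff_sat_of_not_hasIntens _ hint).mpr hsat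
  | ex f ih =>
    by_cases hint : (Fml.ex f).hasIntens ints
    · simp only [Fml.pos, if_pos (And.intro hint hsat)] at hpos
      obtain ⟨d, hd⟩ := hsat
      exact ⟨d, ih d hd ((Set.subset_iUnion (fun d => (f d).pos ints I) d).trans hpos)⟩
    · exact (htSat_iff_sat_of_not_hasIntens _ hint).mpr hsat
end

section
/- For any interpretation I and any set Γ of sentences such that the positive dependency graph G^sp_I(Γ) has no infinite walks, I is a stable model of Γ if and only if I is pointwise stable (i.e., for every element M of I↓, ⟨I↓ ∖ {M}, I⟩ does not satisfy Γ). -/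
variable {P D : Type}

section Aux

variable {ints : P → Bool} {I : Interp P D}

theorem pos_subset_idown (F : Fml P D) : F.pos ints I ⊆ Fml.idown ints I := by
  induction F with
  | atom p ds =>
      intro a ha; rw [Fml.pos] at ha; split at ha
      next h => rcases ha with rfl; exact ⟨h.1, h.2⟩
      next => exact ha.elim
  | eq a b => intro a ha; exact ha.elim
  | bot => intro a ha; exact ha.elim
  | and F G ihF ihG =>
      intro a ha; rw [Fml.pos] at ha; split at ha
      · exact (Set.union_subset ihF ihG) ha
      · exact ha.elim
  | or F G ihF ihG =>
      intro a ha; rw [Fml.pos] at ha; split at ha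
      · exact (Set.union_subset ihF ihG) ha
      · exact ha.elim
  | imp F G ihF ihG =>
      intro a ha; rw [Fml.pos] at ha; split at ha
      · exact ihG ha
      · exact ha.elim
  | all f ih =>
      intro a ha; rw [Fml.pos] at ha; split at ha
      · exact (Set.iUnion_subset ih) ha
      · exact ha.elim
  | ex f ih =>
      intro a ha; rw [Fml.pos] at ha; split at ha
      · exact (Set.iUnion_subset ih) ha
      · exact ha.elim

theorem pos_eq_empty {F : Fml P D} (h : ¬ F.hasIntens ints) : F.pos ints I = ∅ := by
  cases F with
  | atom p ds => rw [Fml.pos, if_neg]; exact fun hc => h hc.1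
  | eq a b => rfl
  | bot => rfl
  | and F G => rw [Fml.pos, if_neg]; exact fun hc => h hc.1
  | or F G => rw [Fml.pos, if_neg]; exact fun hc => h hc.1
  | imp F G => rw [Fml.pos, if_neg]; exact fun hc => h hc.1
  | all f => rw [Fml.pos, if_neg]; exact fun hc => h hc.1
  | ex f => rw [Fml.pos, if_neg]; exact fun hc => h hc.1

theorem htSat_sat {H : Set (GrAtom P D)} (hH : H ⊆ Fml.idown ints I) :
    ∀ {F : Fml P D}, F.htSat ints H I → F.sat I := by
  intro F
  induction F with
  | atom p ds =>
      intro h; rw [Fml.htSat] at h; rw [Fml.sat]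
      split at h
      · exact (hH h).2
      · exact h
  | eq a b => exact id
  | bot => exact id
  | and F G ihF ihG => intro h; exact ⟨ihF h.1, ihG h.2⟩
  | or F G ihF ihG => intro h; exact h.imp ihF ihG
  | imp F G ihF ihG => intro h; exact h.2
  | all f ih => intro h d; exact ih d (h d)
  | ex f ih => intro h; obtain ⟨d, hd⟩ := h; exact ⟨d, ih d hd⟩

theorem htSat_of_pos_subset {H : Set (GrAtom P D)} (hH : H ⊆ Fml.idown ints I) :
    ∀ {F : Fml P D}, F.sat I → F.pos ints I ⊆ H → F.htSat ints H I := by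
  intro F
  induction F with
  | atom p ds =>
      intro hs hp; rw [Fml.htSat]; split
      · apply hp; rw [Fml.pos, if_pos ⟨by simpa using ‹_›, hs⟩]; rfl
      · exact hs
  | eq a b => exact fun hs _ => hs
  | bot => exact fun hs _ => hs
  | and F G ihF ihG =>
      intro hs hp
      by_cases hi : (Fml.and F G).hasIntens ints
      · rw [Fml.pos, if_pos ⟨hi, hs⟩] at hp
        exact ⟨ihF hs.1 (fun a ha => hp (Or.inl ha)), ihG hs.2 (fun a ha => hp (Or.inr ha))⟩
      · have h1 : ¬ F.hasIntens ints := fun h => hi (Or.inl h)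
        have h2 : ¬ G.hasIntens ints := fun h => hi (Or.inr h)
        exact ⟨ihF hs.1 (by rw [pos_eq_empty h1]; exact Set.empty_subset _),
               ihG hs.2 (by rw [pos_eq_empty h2]; exact Set.empty_subset _)⟩
  | or F G ihF ihG =>
      intro hs hp
      by_cases hi : (Fml.or F G).hasIntens ints
      · rw [Fml.pos, if_pos ⟨hi, hs⟩] at hp
        exact hs.imp (fun h => ihF h (fun a ha => hp (Or.inl ha)))
          (fun h => ihG h (fun a ha => hp (Or.inr ha)))
      · have h1 : ¬ F.hasIntens ints := fun h => hi (Or.inl h)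
        have h2 : ¬ G.hasIntens ints := fun h => hi (Or.inr h)
        exact hs.imp (fun h => ihF h (by rw [pos_eq_empty h1]; exact Set.empty_subset _))
          (fun h => ihG h (by rw [pos_eq_empty h2]; exact Set.empty_subset _))
  | imp F G ihF ihG =>
      intro hs hp
      have hpG : G.pos ints I ⊆ H := by
        by_cases hi : (Fml.imp F G).hasIntens ints
        · rw [Fml.pos, if_pos ⟨hi, hs⟩] at hp; exact hp
        · rw [pos_eq_empty (fun h => hi (Or.inr h))]; exact Set.empty_subset _
      exact ⟨fun hF => ihG (hs (htSat_sat hH hF)) hpG, hs⟩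
  | all f ih =>
      intro hs hp d
      refine ih d (hs d) ?_
      by_cases hi : (Fml.all f).hasIntens ints
      · rw [Fml.pos, if_pos ⟨hi, hs⟩] at hp
        exact fun a ha => hp (Set.mem_iUnion.mpr ⟨d, ha⟩)
      · rw [pos_eq_empty (fun h => hi ⟨d, h⟩)]; exact Set.empty_subset _
  | ex f ih =>
      intro hs hp
      obtain ⟨d, hd⟩ := hs
      refine ⟨d, ih d hd ?_⟩
      by_cases hi : (Fml.ex f).hasIntens ints
      · rw [Fml.pos, if_pos ⟨hi, d, hd⟩] at hp
        exact fun a ha => hp (Set.mem_iUnion.mpr ⟨d, ha⟩)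
      · rw [pos_eq_empty (fun h => hi ⟨d, h⟩)]; exact Set.empty_subset _

theorem key_lemma {H : Set (GrAtom P D)} {M : GrAtom P D}
    (hHsub : H ⊆ Fml.idown ints I) (hMH : M ∉ H) :
    ∀ (F : Fml P D),
      (∀ F₁ F₂, F.ruleSub (Fml.imp F₁ F₂) → M ∈ F₂.pos ints I → F₁.pos ints I ⊆ H) →
      F.htSat ints H I → F.htSat ints (Fml.idown ints I \ {M}) I := by
  have hHX : H ⊆ Fml.idown ints I \ {M} := fun a ha =>
    ⟨hHsub ha, fun he => hMH (by rwa [Set.mem_singleton_iff.mp he] at ha)⟩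
  have hXsub : Fml.idown ints I \ {M} ⊆ Fml.idown ints I := Set.diff_subset
  intro F
  induction F with
  | atom p ds =>
      intro _ h; rw [Fml.htSat] at h ⊢; split at h
      · rw [if_pos ‹_›]; exact hHX h
      · rwa [if_neg ‹_›]
  | eq a b => exact fun _ h => h
  | bot => exact fun _ h => h
  | and F G ihF ihG =>
      intro hr h
      exact ⟨ihF (fun F₁ F₂ hs => hr F₁ F₂ (Fml.ruleSub.andL hs)) h.1,
             ihG (fun F₁ F₂ hs => hr F₁ F₂ (Fml.ruleSub.andR hs)) h.2⟩
  | or F G ihF ihG =>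
      intro hr h
      exact h.imp (ihF (fun F₁ F₂ hs => hr F₁ F₂ (Fml.ruleSub.orL hs)))
        (ihG (fun F₁ F₂ hs => hr F₁ F₂ (Fml.ruleSub.orR hs)))
  | imp F G ihF ihG =>
      intro hr h
      refine ⟨fun hXF => ?_, h.2⟩
      have hsF : F.sat I := htSat_sat hXsub hXF
      have hsG : G.sat I := h.2 hsF
      by_cases hMG : M ∈ G.pos ints I
      · have hpF : F.pos ints I ⊆ H := hr F G (Fml.ruleSub.self F G) hMG
        have hHF : F.htSat ints H I := htSat_of_pos_subset hHsub hsF hpF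
        exact ihG (fun F₁ F₂ hs => hr F₁ F₂ (Fml.ruleSub.impR hs)) (h.1 hHF)
      · exact htSat_of_pos_subset hXsub hsG
          (fun a ha => ⟨pos_subset_idown G ha,
            fun he => hMG (by rwa [Set.mem_singleton_iff.mp he] at ha)⟩)
  | all f ih =>
      intro hr h d
      exact ih d (fun F₁ F₂ hs => hr F₁ F₂ (Fml.ruleSub.all d hs)) (h d)
  | ex f ih =>
      intro hr h
      obtain ⟨d, hd⟩ := h
      exact ⟨d, ih d (fun F₁ F₂ hs => hr F₁ F₂ (Fml.ruleSub.ex d hs)) hd⟩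

end Aux

/-- Lemma 3: if `G^sp_I(Γ)` has no infinite walks, then `I` is a stable model of `Γ`
iff `I` is pointwise stable. -/
theorem stable_iff_pointwiseStable {P D : Type} (ints : P → Bool) (I : Interp P D)
    (Γ : Set (Fml P D)) (hwalk : NoInfWalks (depEdge ints I Γ)) :
    StableModel ints I Γ ↔ PointwiseStable ints I Γ := by
  constructor
  · rintro ⟨hsat, hst⟩
    exact ⟨hsat, fun M hM => hst _ (Set.sdiff_singleton_ssubset.mpr hM)⟩
  · rintro ⟨hsat, hpw⟩
    refine ⟨hsat, ?_⟩
    intro H hHss hHt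
    have hHsub : H ⊆ Fml.idown ints I := hHss.subset
    obtain ⟨M0, hM0i, hM0H⟩ := Set.exists_of_ssubset hHss
    by_cases hex : ∃ M, M ∈ Fml.idown ints I ∧ M ∉ H ∧
        ∀ B, depEdge ints I Γ M B → B ∈ H
    · obtain ⟨M, hMi, hMH, hsink⟩ := hex
      refine hpw M hMi ?_
      intro S hS
      refine key_lemma hHsub hMH S ?_ (hHt S hS)
      intro F₁ F₂ hr hMpos B hB
      exact hsink B ⟨S, hS, F₁, F₂, hr, hMpos, hB⟩
    · push_neg at hex
      have step : ∀ a, a ∈ Fml.idown ints I → a ∉ H →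
          ∃ b, depEdge ints I Γ a b ∧ b ∈ Fml.idown ints I ∧ b ∉ H := by
        intro a ha hah
        obtain ⟨B, hE, hBH⟩ := hex a ha hah
        have hBi : B ∈ Fml.idown ints I := by
          obtain ⟨S, _, F₁, F₂, _, _, hB⟩ := hE
          exact pos_subset_idown _ hB
        exact ⟨B, hE, hBi, hBH⟩
      let T := {a : GrAtom P D // a ∈ Fml.idown ints I ∧ a ∉ H}
      let f : T → T := fun a =>
        ⟨(step a.1 a.2.1 a.2.2).choose, (step a.1 a.2.1 a.2.2).choose_spec.2⟩
      have hf : ∀ a : T, depEdge ints I Γ a.1 (f a).1 := fun a =>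
        (step a.1 a.2.1 a.2.2).choose_spec.1
      refine hwalk ⟨fun n => (f^[n] ⟨M0, hM0i, hM0H⟩).1, fun n => ?_⟩
      show depEdge ints I Γ (f^[n] ⟨M0, hM0i, hM0H⟩).1 (f^[n+1] ⟨M0, hM0i, hM0H⟩).1
      rw [Function.iterate_succ_apply']
      exact hf _
end

section
/- For any interpretation I and any completable set Γ of sentences, I is a supported model of Γ if and only if I satisfies the completion COMP[Γ] of Γ. -/
variable {P D : Type}

theorem sat_allN {P D : Type} (I : Interp P D) :
    ∀ (n : ℕ) (F : (Fin n → D) → Fml P D),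
      (allN n F).sat I ↔ ∀ a, (F a).sat I := by
  intro n
  induction n with
  | zero =>
    intro F
    simp only [allN]
    constructor
    · intro h a
      have : a = fun i => i.elim0 := by funext i; exact i.elim0
      rw [this]; exact h
    · intro h; exact h _
  | succ n ih =>
    intro F
    simp only [allN, Fml.sat]
    constructor
    · intro h a
      have := (ih _).mp (h (a 0))
      have h2 := this (Fin.tail a)
      rwa [Fin.cons_self_tail] at h2
    · intro h d
      exact (ih _).mpr fun a => h _

theorem sat_rule_sent {P D : Type} (I : Interp P D) (r : CRule P D) :
    r.sent.sat I ↔ ∀ (u : Fin r.m → D) (v : Fin r.k → D),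
      (r.F u v).sat I → I r.p (List.ofFn v) := by
  rw [CRule.sent, sat_allN]
  constructor
  · intro h u v
    have := (sat_allN I _ _).mp (h u) v
    exact this
  · intro h u
    exact (sat_allN I _ _).mpr fun v => h u v

/-- `I` is a supported model of the completable set `Γ` iff `I ⊨ COMP[Γ]`. -/
theorem supported_iff_satComp {P D : Type} (ints : P → Bool) (I : Interp P D)
    (Γ : CSet P D) (hΓ : Γ.Completable ints) :
    Γ.Supported ints I ↔ Γ.SatComp ints I := by
  obtain ⟨hints, _, _⟩ := hΓ
  constructor
  · rintro ⟨hsat, hsupp⟩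
    refine ⟨fun p hp ds => ⟨hsupp p ds hp, ?_⟩, fun c hc a hF => ?_⟩
    · rintro ⟨r, hr, hpp, v, u, hv, hFv⟩
      have hrs : r.sent.sat I := hsat _ (Or.inl ⟨r, hr, rfl⟩)
      have := (sat_rule_sent I r).mp hrs u v hFv
      rwa [hpp, hv] at this
    · have hcs : c.sent.sat I := hsat _ (Or.inr ⟨c, hc, rfl⟩)
      exact (sat_allN I _ _).mp hcs a hF
  · rintro ⟨hcomp, hconstr⟩
    refine ⟨?_, fun p ds hp hI => (hcomp p hp ds).mp hI⟩
    rintro S (⟨r, hr, rfl⟩ | ⟨c, hc, rfl⟩)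
    · refine (sat_rule_sent I r).mpr fun u v hF => ?_
      exact (hcomp r.p (hints r hr) (List.ofFn v)).mpr ⟨r, hr, rfl, v, u, rfl, hF⟩
    · exact (sat_allN I _ _).mpr fun a => hconstr c hc a
end

section
/- Main Lemma: For any interpretation I and any completable set Γ of sentences such that the positive dependency graph G^sp_I(Γ) has no infinite walks, I is a stable model of Γ if and only if I satisfies the completion COMP[Γ]. -/
variable {P D : Type}

/-! ### Auxiliary lemmas -/

namespace Aux

variable {P D : Type} {ints : P → Bool} {H : Set (GrAtom P D)} {I : Interp P D}

open Fml

theorem htSat_sat (hH : H ⊆ idown ints I) :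
    ∀ (F : Fml P D), F.htSat ints H I → F.sat I := by
  intro F
  induction F with
  | atom p ds =>
    intro h
    simp only [htSat, sat] at *
    split at h
    · exact (hH h).2
    · exact h
  | eq a b => exact id
  | bot => exact id
  | and F G ihF ihG => exact fun h => ⟨ihF h.1, ihG h.2⟩
  | or F G ihF ihG => exact fun h => h.imp ihF ihG
  | imp F G ihF ihG => exact fun h => h.2
  | all f ih => exact fun h d => ih d (h d)
  | ex f ih => exact fun ⟨d, hd⟩ => ⟨d, ih d hd⟩

theorem htSat_iff_sat_of_not_hasIntens :
    ∀ (F : Fml P D), ¬ F.hasIntens ints → (F.htSat ints H I ↔ F.sat I) := by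
  intro F
  induction F with
  | atom p ds =>
    intro h
    simp only [hasIntens] at h
    simp only [htSat, sat, if_neg h]
  | eq a b => exact fun _ => Iff.rfl
  | bot => exact fun _ => Iff.rfl
  | and F G ihF ihG =>
    intro h
    simp only [hasIntens, not_or] at h
    exact and_congr (ihF h.1) (ihG h.2)
  | or F G ihF ihG =>
    intro h
    simp only [hasIntens, not_or] at h
    exact or_congr (ihF h.1) (ihG h.2)
  | imp F G ihF ihG =>
    intro h
    simp only [hasIntens, not_or] at h
    show _ ∧ _ ↔ _
    rw [ihF h.1, ihG h.2, and_self]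
    exact Iff.rfl
  | all f ih =>
    intro h
    simp only [hasIntens, not_exists] at h
    exact forall_congr' fun d => ih d (h d)
  | ex f ih =>
    intro h
    simp only [hasIntens, not_exists] at h
    exact exists_congr fun d => ih d (h d)

theorem hasIntens_of (F : Fml P D) (h1 : F.sat I) (h2 : ¬ F.htSat ints H I) :
    F.hasIntens ints := by
  by_contra h
  exact h2 ((htSat_iff_sat_of_not_hasIntens F h).2 h1)

theorem pos_subset : ∀ (F : Fml P D), F.pos ints I ⊆ idown ints I := by
  intro F
  induction F with
  | atom p ds =>
    intro B hB
    simp only [pos] at hB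
    split at hB
    · rename_i hc
      rcases hB with rfl
      exact ⟨hc.1, hc.2⟩
    · exact absurd hB (Set.notMem_empty _)
  | eq a b => simp [pos]
  | bot => simp [pos]
  | and F G ihF ihG =>
    intro B hB
    simp only [pos] at hB
    split at hB
    · exact hB.elim (fun h => ihF h) (fun h => ihG h)
    · exact absurd hB (Set.notMem_empty _)
  | or F G ihF ihG =>
    intro B hB
    simp only [pos] at hB
    split at hB
    · exact hB.elim (fun h => ihF h) (fun h => ihG h)
    · exact absurd hB (Set.notMem_empty _)
  | imp F G ihF ihG =>
    intro B hB
    simp only [pos] at hB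
    split at hB
    · exact ihG hB
    · exact absurd hB (Set.notMem_empty _)
  | all f ih =>
    intro B hB
    simp only [pos] at hB
    split at hB
    · obtain ⟨s, ⟨d, rfl⟩, hd⟩ := hB
      exact ih d hd
    · exact absurd hB (Set.notMem_empty _)
  | ex f ih =>
    intro B hB
    simp only [pos] at hB
    split at hB
    · obtain ⟨s, ⟨d, rfl⟩, hd⟩ := hB
      exact ih d hd
    · exact absurd hB (Set.notMem_empty _)

theorem key (hH : H ⊆ idown ints I) :
    ∀ (F : Fml P D), F.sat I → ¬ F.htSat ints H I →
      ∃ B ∈ F.pos ints I, B ∉ H := by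
  intro F
  induction F with
  | atom p ds =>
    intro h1 h2
    simp only [htSat] at h2
    split at h2
    · refine ⟨(p, ds), ?_, h2⟩
      rename_i hp
      have : I p ds := h1
      simp only [pos, if_pos (And.intro hp this)]
      rfl
    · exact absurd h1 h2
  | eq a b => exact fun h1 h2 => absurd h1 h2
  | bot => exact fun h1 _ => h1.elim
  | and F G ihF ihG =>
    intro h1 h2
    have hI : (Fml.and F G).hasIntens ints := hasIntens_of _ h1 h2
    simp only [htSat, not_and_or] at h2
    have hpos : (Fml.and F G).pos ints I = F.pos ints I ∪ G.pos ints I := by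
      simp only [pos, if_pos (And.intro hI h1)]
    rcases h2 with h2 | h2
    · obtain ⟨B, hB, hBH⟩ := ihF h1.1 h2
      exact ⟨B, hpos ▸ Or.inl hB, hBH⟩
    · obtain ⟨B, hB, hBH⟩ := ihG h1.2 h2
      exact ⟨B, hpos ▸ Or.inr hB, hBH⟩
  | or F G ihF ihG =>
    intro h1 h2
    have hI : (Fml.or F G).hasIntens ints := hasIntens_of _ h1 h2
    simp only [htSat, not_or] at h2
    have hpos : (Fml.or F G).pos ints I = F.pos ints I ∪ G.pos ints I := by
      simp only [pos, if_pos (And.intro hI h1)]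
    rcases h1 with h1 | h1
    · obtain ⟨B, hB, hBH⟩ := ihF h1 h2.1
      exact ⟨B, hpos ▸ Or.inl hB, hBH⟩
    · obtain ⟨B, hB, hBH⟩ := ihG h1 h2.2
      exact ⟨B, hpos ▸ Or.inr hB, hBH⟩
  | imp F G ihF ihG =>
    intro h1 h2
    have hI : (Fml.imp F G).hasIntens ints := hasIntens_of _ h1 h2
    have hpos : (Fml.imp F G).pos ints I = G.pos ints I := by
      simp only [pos, if_pos (And.intro hI h1)]
    simp only [htSat, not_and_or] at h2
    rcases h2 with h2 | h2
    · rw [Classical.not_imp] at h2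
      have hGsat : G.sat I := h1 (htSat_sat hH F h2.1)
      obtain ⟨B, hB, hBH⟩ := ihG hGsat h2.2
      exact ⟨B, hpos ▸ hB, hBH⟩
    · exact absurd h1 h2
  | all f ih =>
    intro h1 h2
    have hI : (Fml.all f).hasIntens ints := hasIntens_of _ h1 h2
    have hpos : (Fml.all f).pos ints I = ⋃ d, (f d).pos ints I := by
      simp only [pos, if_pos (And.intro hI h1)]
    simp only [htSat, not_forall] at h2
    obtain ⟨d, hd⟩ := h2
    obtain ⟨B, hB, hBH⟩ := ih d (h1 d) hd
    exact ⟨B, hpos ▸ Set.mem_iUnion.2 ⟨d, hB⟩, hBH⟩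
  | ex f ih =>
    intro h1 h2
    have hI : (Fml.ex f).hasIntens ints := hasIntens_of _ h1 h2
    have hpos : (Fml.ex f).pos ints I = ⋃ d, (f d).pos ints I := by
      simp only [pos, if_pos (And.intro hI h1)]
    simp only [htSat, not_exists] at h2
    obtain ⟨d, hd⟩ := h1
    obtain ⟨B, hB, hBH⟩ := ih d hd (h2 d)
    exact ⟨B, hpos ▸ Set.mem_iUnion.2 ⟨d, hB⟩, hBH⟩

theorem sat_allN (I : Interp P D) :
    ∀ (n : ℕ) (F : (Fin n → D) → Fml P D), (allN n F).sat I ↔ ∀ a, (F a).sat I := by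
  intro n
  induction n with
  | zero =>
    intro F
    constructor
    · intro h a
      have : a = fun i => i.elim0 := funext fun i => i.elim0
      rw [this]; exact h
    · intro h; exact h _
  | succ n ih =>
    intro F
    show (∀ d, (allN n fun a => F (Fin.cons d a)).sat I) ↔ _
    constructor
    · intro h a
      have := (ih _).1 (h (a 0)) (Fin.tail a)
      rwa [Fin.cons_self_tail] at this
    · intro h d
      exact (ih _).2 fun a => h (Fin.cons d a)

theorem htSat_allN :
    ∀ (n : ℕ) (F : (Fin n → D) → Fml P D),
      (allN n F).htSat ints H I ↔ ∀ a, (F a).htSat ints H I := by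
  intro n
  induction n with
  | zero =>
    intro F
    constructor
    · intro h a
      have : a = fun i => i.elim0 := funext fun i => i.elim0
      rw [this]; exact h
    · intro h; exact h _
  | succ n ih =>
    intro F
    show (∀ d, (allN n fun a => F (Fin.cons d a)).htSat ints H I) ↔ _
    constructor
    · intro h a
      have := (ih _).1 (h (a 0)) (Fin.tail a)
      rwa [Fin.cons_self_tail] at this
    · intro h d
      exact (ih _).2 fun a => h (Fin.cons d a)

end Aux

/-- Main Lemma: if `G^sp_I(Γ)` has no infinite walks, then `I` is a stable model of the
completable set `Γ` iff `I ⊨ COMP[Γ]`. -/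
theorem mainLemma {P D : Type} (ints : P → Bool) (I : Interp P D)
    (Γ : CSet P D) (hΓ : Γ.Completable ints)
    (hwalk : NoInfWalks (Γ.edge ints I)) :
    Γ.Stable ints I ↔ Γ.SatComp ints I := by
  obtain ⟨hints, -, hnoint⟩ := hΓ
  constructor
  · rintro ⟨hsat, hmin⟩
    refine ⟨?_, ?_⟩
    · intro p hp ds
      constructor
      · -- supportedness
        intro hIp
        by_contra hno
        push_neg at hno
        have hAI : (p, ds) ∈ Fml.idown ints I := ⟨hp, hIp⟩
        set H : Set (GrAtom P D) := Fml.idown ints I \ {(p, ds)} with hHdef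
        have hHsub : H ⊆ Fml.idown ints I := Set.diff_subset
        have hss : H ⊂ Fml.idown ints I :=
          (Set.ssubset_iff_of_subset hHsub).2 ⟨(p, ds), hAI, fun hAH => hAH.2 rfl⟩
        refine hmin H hss ?_
        rintro S (⟨r, hr, rfl⟩ | ⟨c, hc, rfl⟩)
        · rw [CRule.sent, Aux.htSat_allN]
          intro u
          rw [Aux.htSat_allN]
          intro v
          have hsatr := hsat r.sent (Or.inl ⟨r, hr, rfl⟩)
          rw [CRule.sent, Aux.sat_allN] at hsatr
          have hsatr' := (Aux.sat_allN I _ _).1 (hsatr u) v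
          refine ⟨?_, hsatr'⟩
          intro hF
          have hFsat := Aux.htSat_sat hHsub _ hF
          have hhead : I r.p (List.ofFn v) := hsatr' hFsat
          show Fml.htSat ints H I (Fml.atom r.p (List.ofFn v))
          simp only [Fml.htSat, if_pos (hints r hr)]
          refine ⟨⟨hints r hr, hhead⟩, ?_⟩
          intro heq
          have h1 : r.p = p := congrArg Prod.fst heq
          have h2 : List.ofFn v = ds := congrArg Prod.snd heq
          exact hno r hr h1 v u h2 hFsat
        · rw [CConstr.sent, Aux.htSat_allN]
          intro a
          have hsatc := hsat c.sent (Or.inr ⟨c, hc, rfl⟩)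
          rw [CConstr.sent, Aux.sat_allN] at hsatc
          refine ⟨?_, hsatc a⟩
          intro hF
          exact (Aux.htSat_iff_sat_of_not_hasIntens _ (hnoint c hc a)).2
            (hsatc a (Aux.htSat_sat hHsub _ hF))
      · rintro ⟨r, hr, rfl, v, u, rfl, hF⟩
        have h := hsat r.sent (Or.inl ⟨r, hr, rfl⟩)
        rw [CRule.sent, Aux.sat_allN] at h
        exact (Aux.sat_allN I _ _).1 (h u) v hF
    · intro c hc a hF
      have h := hsat c.sent (Or.inr ⟨c, hc, rfl⟩)
      rw [CConstr.sent, Aux.sat_allN] at h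
      exact h a hF
  · rintro ⟨hcomp, hconstr⟩
    have hsat : SatSet I Γ.sents := by
      rintro S (⟨r, hr, rfl⟩ | ⟨c, hc, rfl⟩)
      · rw [CRule.sent, Aux.sat_allN]
        intro u
        rw [Aux.sat_allN]
        intro v hF
        exact (hcomp r.p (hints r hr) (List.ofFn v)).2 ⟨r, hr, rfl, v, u, rfl, hF⟩
      · rw [CConstr.sent, Aux.sat_allN]
        intro a
        exact fun hF => hconstr c hc a hF
    refine ⟨hsat, ?_⟩
    intro H hss hht
    have hHsub : H ⊆ Fml.idown ints I := hss.subset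
    have step : ∀ A : GrAtom P D, A ∈ Fml.idown ints I → A ∉ H →
        ∃ B, Γ.edge ints I A B ∧ B ∈ Fml.idown ints I ∧ B ∉ H := by
      rintro ⟨p, ds⟩ ⟨hp, hIp⟩ hAH
      obtain ⟨r, hr, hrp, v, u, hv, hF⟩ := (hcomp p hp ds).1 hIp
      have hhtr := hht r.sent (Or.inl ⟨r, hr, rfl⟩)
      rw [CRule.sent, Aux.htSat_allN] at hhtr
      have h2 := (Aux.htSat_allN _ _).1 (hhtr u) v
      have hnF : ¬ (r.F u v).htSat ints H I := by
        intro hFht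
        have hmem := h2.1 hFht
        simp only [Fml.htSat, if_pos (hints r hr)] at hmem
        rw [hrp, hv] at hmem
        exact hAH hmem
      obtain ⟨B, hB, hBH⟩ := Aux.key hHsub _ hF hnF
      refine ⟨B, ⟨r.F u v, Fml.atom r.p (List.ofFn v),
        Or.inl ⟨r, hr, u, v, rfl, rfl⟩, ?_, hB⟩, Aux.pos_subset _ hB, hBH⟩
      have hIr : I r.p (List.ofFn v) := by rw [hrp, hv]; exact hIp
      show (p, ds) ∈ Fml.pos ints I (Fml.atom r.p (List.ofFn v))
      simp only [Fml.pos, if_pos (And.intro (hints r hr) hIr)]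
      rw [hrp, hv]
      rfl
    obtain ⟨A₀, hA₀I, hA₀H⟩ := Set.exists_of_ssubset hss
    have step' : ∀ A : {A : GrAtom P D // A ∈ Fml.idown ints I ∧ A ∉ H},
        ∃ B : {A : GrAtom P D // A ∈ Fml.idown ints I ∧ A ∉ H},
          Γ.edge ints I A.1 B.1 := by
      rintro ⟨A, hAI, hAH⟩
      obtain ⟨B, hE, hBI, hBH⟩ := step A hAI hAH
      exact ⟨⟨B, hBI, hBH⟩, hE⟩
    choose g hg using step'
    refine hwalk ⟨fun n => (g^[n] ⟨A₀, hA₀I, hA₀H⟩).1, ?_⟩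
    intro n
    show CSet.edge ints I Γ (g^[n] ⟨A₀, hA₀I, hA₀H⟩).1 (g^[n+1] ⟨A₀, hA₀I, hA₀H⟩).1
    rw [Function.iterate_succ_apply']
    exact hg _
end
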